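/- arXiv:1301.2986 — 2 statements merged into one kernel-verified Lean document; each statement's English description precedes it below -/
import Mathlib

section
/- For any prime p and nonnegative integers a, b, r, s with 0 ≤ b, s ≤ p−1, the Gaussian binomial coefficient C(ap+b, rp+s)_q is congruent to C(a,r)·C(b,s)_q modulo [p]_q in ℤ[q]. -/
open Polynomial Finset

noncomputable def qInt (n : ℕ) : Polynomial ℤ := ∑ i ∈ Finset.range n, X ^ i

noncomputable def qBinom : ℕ → ℕ → Polynomial ℤ
  | _, 0 => 1
  | 0, _ + 1 => 0
  | n + 1, k + 1 => qBinom n k + X ^ (k + 1) * qBinom n (k + 1)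

/-!
Work in `ℤ[X] ⧸ ([p]_q)`, i.e. `AdjoinRoot (qInt p)`, where `q ^ p = 1`. Since `[p]_q` is the
cyclotomic polynomial `Φ_p`, it is prime, and the q-factorial formula
`C(n, k)_q [k]_q! [n-k]_q! = [n]_q!` shows `C(p, k)_q ≡ 0` for `0 < k < p`. Feeding this into the
q-Pascal recurrence gives `C(n + p, k)_q ≡ C(n, k)_q + C(n, k - p)_q` (the last term present only
for `k ≥ p`), the q-analogue of `(1 + t)^(n+p) ≡ (1 + t)^n (1 + t^p)`; induction on `a` then
yields q-Lucas exactly as for ordinary binomial coefficients.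
-/

lemma qInt_mul_X_sub_one (n : ℕ) : qInt n * (X - 1) = X ^ n - 1 := geom_sum_mul X n

lemma qInt_add (m n : ℕ) : qInt (m + n) = qInt m + X ^ m * qInt n := by
  simp only [qInt, sum_range_add, pow_add, mul_sum]

lemma eval_one_qInt (n : ℕ) : (qInt n).eval 1 = n := by
  simp [qInt, eval_finsetSum]

lemma qInt_ne_zero {n : ℕ} (hn : n ≠ 0) : qInt n ≠ 0 := fun h =>
  hn (by simpa [h, eq_comm] using eval_one_qInt n)

lemma natDegree_qInt_le (n : ℕ) : (qInt n).natDegree ≤ n - 1 :=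
  natDegree_sum_le_of_forall_le _ _ fun i hi => by
    simpa using Nat.le_sub_one_of_lt (mem_range.mp hi)

lemma qInt_eq_cyclotomic {p : ℕ} (hp : p.Prime) : qInt p = cyclotomic p ℤ := by
  have := Fact.mk hp
  rw [cyclotomic_prime, qInt]

lemma prime_qInt {p : ℕ} (hp : p.Prime) : Prime (qInt p) := by
  rw [qInt_eq_cyclotomic hp]
  exact (cyclotomic.irreducible hp.pos).prime

lemma qInt_not_dvd_qInt {p m : ℕ} (hp : p.Prime) (hm : m ≠ 0) (hmp : m < p) :
    ¬ qInt p ∣ qInt m := fun h => by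
  have := natDegree_le_of_dvd h (qInt_ne_zero hm)
  rw [qInt_eq_cyclotomic hp, natDegree_cyclotomic, Nat.totient_prime hp] at this
  have := natDegree_qInt_le m
  omega

lemma qBinom_zero_right (n : ℕ) : qBinom n 0 = 1 := by cases n <;> rfl

lemma qBinom_succ_succ (n k : ℕ) :
    qBinom (n + 1) (k + 1) = qBinom n k + X ^ (k + 1) * qBinom n (k + 1) := rfl

lemma qBinom_eq_zero_of_lt : ∀ {n k : ℕ}, n < k → qBinom n k = 0
  | 0, _ + 1, _ => rfl
  | n + 1, k + 1, h => by
    rw [qBinom_succ_succ, qBinom_eq_zero_of_lt (by omega), qBinom_eq_zero_of_lt (by omega),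
      mul_zero, add_zero]

lemma qBinom_self : ∀ n : ℕ, qBinom n n = 1
  | 0 => rfl
  | n + 1 => by rw [qBinom_succ_succ, qBinom_self n, qBinom_eq_zero_of_lt n.lt_succ_self,
      mul_zero, add_zero]

noncomputable def qFactorial (n : ℕ) : ℤ[X] := ∏ i ∈ range n, qInt (i + 1)

lemma qFactorial_succ (n : ℕ) : qFactorial (n + 1) = qFactorial n * qInt (n + 1) :=
  prod_range_succ _ _

lemma qBinom_add_mul_qFactorial (m k : ℕ) :
    qBinom (m + k) k * (qFactorial k * qFactorial m) = qFactorial (m + k) := by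
  induction m generalizing k with
  | zero => simp [qBinom_self, qFactorial]
  | succ m ihm =>
    induction k with
    | zero => simp [qBinom_zero_right, qFactorial]
    | succ k ihk =>
      have ihm' := ihm (k + 1)
      rw [show m + (k + 1) = m + 1 + k by omega] at ihm'
      have hsplit : qInt (m + 1 + k + 1) = qInt (k + 1) + X ^ (k + 1) * qInt (m + 1) := by
        rw [← qInt_add]; congr 1; omega
      rw [show m + 1 + (k + 1) = m + 1 + k + 1 by omega, qBinom_succ_succ,
        qFactorial_succ (m + 1 + k), hsplit]
      simp only [qFactorial_succ] at ihk ihm' ⊢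
      linear_combination qInt (k + 1) * ihk + X ^ (k + 1) * qInt (m + 1) * ihm'

lemma qInt_not_dvd_qFactorial {p n : ℕ} (hp : p.Prime) (hn : n < p) :
    ¬ qInt p ∣ qFactorial n := by
  rw [qFactorial, (prime_qInt hp).dvd_finsetProd_iff]
  rintro ⟨i, hi, hdvd⟩
  exact qInt_not_dvd_qInt hp i.succ_ne_zero (by rw [mem_range] at hi; omega) hdvd

lemma qInt_dvd_qBinom {p k : ℕ} (hp : p.Prime) (hk0 : 0 < k) (hkp : k < p) :
    qInt p ∣ qBinom p k := by
  have hfac := qBinom_add_mul_qFactorial (p - k) k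
  rw [Nat.sub_add_cancel hkp.le] at hfac
  have hdvd : qInt p ∣ qBinom p k * (qFactorial k * qFactorial (p - k)) := by
    rw [hfac, ← Nat.sub_add_cancel hp.one_le, qFactorial_succ]
    exact dvd_mul_left _ _
  have hprime := prime_qInt hp
  refine ((hprime.dvd_or_dvd hdvd).resolve_right fun h => ?_)
  rcases hprime.dvd_or_dvd h with h | h
  · exact qInt_not_dvd_qFactorial hp hkp h
  · exact qInt_not_dvd_qFactorial hp (by omega) h

section Quotient

open AdjoinRoot

variable {p : ℕ}

lemma root_qInt_pow_self : root (qInt p) ^ p = 1 := by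
  rw [← sub_eq_zero, ← mk_X, ← map_pow, ← map_one (mk (qInt p)), ← map_sub,
    ← qInt_mul_X_sub_one, map_mul, mk_self, zero_mul]

lemma mk_qBinom_succ_succ (n k : ℕ) :
    mk (qInt p) (qBinom (n + 1) (k + 1)) =
      mk (qInt p) (qBinom n k) + root (qInt p) ^ (k + 1) * mk (qInt p) (qBinom n (k + 1)) := by
  rw [qBinom_succ_succ, map_add, map_mul, map_pow, mk_X]

lemma mk_qBinom_add_prime_of_lt (hp : p.Prime) (n : ℕ) {k : ℕ} (hk : k < p) :
    mk (qInt p) (qBinom (n + p) k) = mk (qInt p) (qBinom n k) := by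
  induction n generalizing k with
  | zero =>
    rcases Nat.eq_zero_or_pos k with rfl | hk0
    · simp only [qBinom_zero_right]
    · rw [zero_add, qBinom_eq_zero_of_lt hk0, map_zero, mk_eq_zero]
      exact qInt_dvd_qBinom hp hk0 hk
  | succ n ih =>
    cases k with
    | zero => simp only [qBinom_zero_right]
    | succ k =>
      rw [Nat.add_right_comm, mk_qBinom_succ_succ, mk_qBinom_succ_succ, ih (by omega), ih hk]

lemma mk_qBinom_add_prime_add_prime (hp : p.Prime) (n j : ℕ) :
    mk (qInt p) (qBinom (n + p) (j + p)) =
      mk (qInt p) (qBinom n (j + p)) + mk (qInt p) (qBinom n j) := by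
  induction n generalizing j with
  | zero =>
    rcases Nat.eq_zero_or_pos j with rfl | hj0
    · simp [qBinom_self, qBinom_eq_zero_of_lt hp.pos]
    · simp [qBinom_eq_zero_of_lt hj0, qBinom_eq_zero_of_lt (by omega : p < j + p),
        qBinom_eq_zero_of_lt (by omega : 0 < j + p)]
  | succ n ih =>
    have hroot : ∀ i, root (qInt p) ^ (i + p) = root (qInt p) ^ i := fun i => by
      rw [pow_add, root_qInt_pow_self, mul_one]
    cases j with
    | zero =>
      have hsucc : ∀ i, mk (qInt p) (qBinom (i + 1) p) =
          mk (qInt p) (qBinom i (p - 1)) + root (qInt p) ^ p * mk (qInt p) (qBinom i p) :=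
        fun i => by simpa only [Nat.sub_add_cancel hp.one_le] using mk_qBinom_succ_succ i (p - 1)
      have h0 := ih 0
      rw [zero_add] at h0 ⊢
      rw [Nat.add_right_comm, hsucc, hsucc, h0,
        mk_qBinom_add_prime_of_lt hp n (Nat.sub_one_lt hp.ne_zero), root_qInt_pow_self]
      simp only [qBinom_zero_right, map_one]
      ring
    | succ j =>
      rw [Nat.add_right_comm n 1 p, Nat.add_right_comm j 1 p]
      simp only [mk_qBinom_succ_succ]
      rw [Nat.add_right_comm j p 1, ih, ih, hroot]
      ring

lemma mk_qBinom_mul_add_mul_add (hp : p.Prime) (a r : ℕ) {b s : ℕ} (hb : b < p) (hs : s < p) :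
    mk (qInt p) (qBinom (a * p + b) (r * p + s)) = a.choose r * mk (qInt p) (qBinom b s) := by
  induction a generalizing r with
  | zero =>
    cases r with
    | zero => simp
    | succ r =>
      rw [qBinom_eq_zero_of_lt (by nlinarith)]
      simp
  | succ a ih =>
    rw [Nat.succ_mul, Nat.add_right_comm]
    cases r with
    | zero =>
      have h0 := ih 0
      rw [zero_mul, zero_add, Nat.choose_zero_right] at h0 ⊢
      rw [mk_qBinom_add_prime_of_lt hp _ hs, h0]
    | succ r =>
      rw [Nat.succ_mul, Nat.add_right_comm _ p, mk_qBinom_add_prime_add_prime hp,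
        Nat.add_right_comm _ s, ← Nat.succ_mul, ih, ih, Nat.choose_succ_succ', Nat.cast_add]
      ring

end Quotient

theorem q_lucas (p : ℕ) (hp : p.Prime) (a b r s : ℕ) (hb : b ≤ p - 1) (hs : s ≤ p - 1) :
    qInt p ∣ qBinom (a * p + b) (r * p + s) - C (a.choose r : ℤ) * qBinom b s := by
  have hp0 := hp.pos
  rw [← AdjoinRoot.mk_eq_mk, mk_qBinom_mul_add_mul_add hp a r (by omega) (by omega), C_eq_natCast,
    map_mul, map_natCast]
end

section
/- For any prime p ≥ 5, C(2p − 1, p − 1) ≡ 1 modulo p^3. -/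
open Polynomial Finset

/-!
By Vandermonde, `C(2p, p) = ∑ₖ C(p, k)²`. For `0 < k < p` write `C(p, k) = p tₖ`; then
`tₖ k = C(p - 1, k - 1) ≡ (-1)^(k - 1) (mod p)`, so `tₖ² ≡ k⁻² (mod p)` and
`C(2p, p) = 2 + p² ∑ₖ tₖ² ≡ 2 + p² ∑ₖ k⁻² (mod p³)`. The last sum is `∑ x²` over `𝔽ₚ`, which
vanishes because `p - 1 ∤ 2`. Finally `C(2p, p) = 2 C(2p - 1, p - 1)` and `2` is a unit mod `p³`.
-/

theorem FiniteField.sum_inv_pow_lt_card_sub_one {K : Type*} [Field K] [Fintype K] {i : ℕ}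
    (h : i < Fintype.card K - 1) : ∑ x : K, x⁻¹ ^ i = 0 :=
  (Equiv.sum_comp (Equiv.inv K) (· ^ i)).trans (FiniteField.sum_pow_lt_card_sub_one _ i h)

theorem ZMod.sum_range_natCast {M : Type*} [AddCommMonoid M] (n : ℕ) [NeZero n]
    (f : ZMod n → M) : ∑ k ∈ range n, f k = ∑ x : ZMod n, f x :=
  sum_nbij' (fun k => (k : ZMod n)) ZMod.val (fun _ _ => mem_univ _)
    (fun x _ => mem_range.mpr (ZMod.val_lt x))
    (fun _ hk => ZMod.val_natCast_of_lt (mem_range.mp hk))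
    (fun x _ => ZMod.natCast_zmod_val x) (fun _ _ => rfl)

namespace ZMod

variable {p : ℕ} [Fact p.Prime]

theorem sum_Ico_inv_sq_eq_zero (hp5 : 5 ≤ p) : ∑ k ∈ Ico 1 p, ((k : ZMod p)⁻¹) ^ 2 = 0 := by
  have hsum := FiniteField.sum_inv_pow_lt_card_sub_one (K := ZMod p) (i := 2)
    (by rw [ZMod.card]; omega)
  rw [← ZMod.sum_range_natCast p (fun x => x⁻¹ ^ 2),
    sum_range_eq_add_Ico _ (Fact.out : p.Prime).pos] at hsum
  simpa using hsum

theorem natCast_sub_one_choose {k : ℕ} (hk : k < p) :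
    ((p - 1).choose k : ZMod p) = (-1) ^ k := by
  induction k with
  | zero => simp
  | succ k ih =>
    have hpascal : (p - 1).choose k + (p - 1).choose (k + 1) = p.choose (k + 1) := by
      rw [← Nat.choose_succ_succ', Nat.sub_add_cancel (Fact.out : p.Prime).one_le]
    have hdvd : ((p.choose (k + 1) : ℕ) : ZMod p) = 0 :=
      (ZMod.natCast_eq_zero_iff _ _).mpr
        ((Fact.out : p.Prime).dvd_choose_self k.succ_ne_zero hk)
    rw [← hpascal, Nat.cast_add, ih (by omega)] at hdvd
    rw [pow_succ]
    linear_combination hdvd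

end ZMod

theorem Nat.Prime.choose_div_mul_eq {p k : ℕ} (hp : p.Prime) (hk0 : k ≠ 0) (hkp : k < p) :
    p.choose k / p * k = (p - 1).choose (k - 1) := by
  have h := Nat.add_one_mul_choose_eq (p - 1) (k - 1)
  rw [Nat.sub_add_cancel hp.one_le, Nat.sub_add_cancel (Nat.one_le_iff_ne_zero.mpr hk0),
    ← Nat.mul_div_cancel' (hp.dvd_choose_self hk0 hkp), mul_assoc] at h
  exact (Nat.eq_of_mul_eq_mul_left hp.pos h).symm

theorem Nat.Prime.dvd_sum_sq_choose_div {p : ℕ} (hp : p.Prime) (hp5 : 5 ≤ p) :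
    p ∣ ∑ k ∈ Ico 1 p, (p.choose k / p) ^ 2 := by
  have := Fact.mk hp
  rw [← ZMod.natCast_eq_zero_iff, Nat.cast_sum, ← ZMod.sum_Ico_inv_sq_eq_zero hp5]
  refine sum_congr rfl fun k hk => ?_
  obtain ⟨hk1, hkp⟩ := mem_Ico.mp hk
  have hk : (k : ZMod p) ≠ 0 := by
    rw [Ne, ZMod.natCast_eq_zero_iff]
    exact fun h => absurd (Nat.le_of_dvd hk1 h) (by omega)
  have hmul := congrArg (Nat.cast : ℕ → ZMod p) (hp.choose_div_mul_eq (by omega) hkp)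
  rw [Nat.cast_mul, ZMod.natCast_sub_one_choose (by omega)] at hmul
  rw [Nat.cast_pow, (eq_mul_inv_iff_mul_eq₀ hk).mpr hmul, mul_pow, ← pow_mul,
    (by omega : (k - 1) * 2 = 2 * (k - 1)), pow_mul, neg_one_sq, one_pow, one_mul]

theorem Nat.Prime.centralBinom_modEq_two {p : ℕ} (hp : p.Prime) (hp5 : 5 ≤ p) :
    p.centralBinom ≡ 2 [MOD p ^ 3] := by
  have hterm (k : ℕ) (hk : k ∈ Ico 1 p) : p.choose k ^ 2 = p ^ 2 * (p.choose k / p) ^ 2 := by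
    obtain ⟨hk1, hkp⟩ := mem_Ico.mp hk
    rw [← mul_pow, Nat.mul_div_cancel' (hp.dvd_choose_self (by omega) hkp)]
  obtain ⟨s, hs⟩ := hp.dvd_sum_sq_choose_div hp5
  calc p.centralBinom = 2 + p ^ 3 * s := by
        rw [Nat.centralBinom_eq_two_mul_choose, ← Nat.sum_range_choose_sq, sum_range_succ,
          sum_range_eq_add_Ico _ hp.pos, sum_congr rfl hterm, ← mul_sum, hs, Nat.choose_zero_right, Nat.choose_self]
        ring
    _ ≡ 2 + 0 [MOD p ^ 3] := (Nat.modEq_zero_iff_dvd.mpr (dvd_mul_right _ _)).add_left 2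

theorem Nat.centralBinom_eq_two_mul_choose_sub_one {n : ℕ} (hn : n ≠ 0) :
    n.centralBinom = 2 * (2 * n - 1).choose (n - 1) := by
  obtain ⟨m, rfl⟩ := Nat.exists_eq_succ_of_ne_zero hn
  rw [Nat.centralBinom_eq_two_mul_choose, (by omega : 2 * (m + 1) = 2 * m + 1 + 1),
    Nat.choose_succ_succ', Nat.choose_symm_half]
  simp [two_mul]

theorem wolstenholme_congruence (p : ℕ) (hp : p.Prime) (hp5 : 5 ≤ p) :
    ((2 * p - 1).choose (p - 1) : ℤ) ≡ 1 [ZMOD ((p : ℤ) ^ 3)] := by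
  have hcentral : 2 * (2 * p - 1).choose (p - 1) ≡ 2 * 1 [MOD p ^ 3] := by
    rw [← Nat.centralBinom_eq_two_mul_choose_sub_one hp.ne_zero]
    exact hp.centralBinom_modEq_two hp5
  have hcoprime : (p ^ 3).gcd 2 = 1 :=
    Nat.Coprime.pow_left 3 ((Nat.coprime_primes hp Nat.prime_two).mpr (by omega))
  exact_mod_cast Int.natCast_modEq_iff.mpr (hcentral.cancel_left_of_coprime hcoprime)
end
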